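/- For every 1-Sperner hypergraph H = (V, E) with V ≠ ∅, the number of hyperedges is at most the number of vertices: |E| ≤ |V|. -/

import Mathlib

/-!
Induction on the vertex set `V`. In a 1-Sperner family `E` with at least two edges, let `emax` be
an edge of maximum size and `emin` an edge of minimum size among the others; then
`emin \ emax = {z}` for a vertex `z`, and every edge through `z` differs from every edge avoiding
`z` exactly by `z`. So if `U` is the union of the edges through `z`, with `z` removed, then every
edge avoiding `z` contains `U`; removing `z` from the edges through `z`, and `U` from the others,
yields two 1-Sperner families on the disjoint sets `U` and `V \ ({z} ∪ U)`, whose sizes add up to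
`|V| - 1`. The bound is proved as `|E| ≤ max |V| 1` so that the induction also covers empty parts.
-/

open Finset

/-- A hypergraph with hyperedge set `E` is 1-Sperner if every two distinct
hyperedges `e, f` satisfy `min |e \ f| |f \ e| = 1`. -/
def OneSperner {α : Type*} [DecidableEq α] (E : Finset (Finset α)) : Prop :=
  ∀ e ∈ E, ∀ f ∈ E, e ≠ f → min (e \ f).card (f \ e).card = 1

lemma Finset.eq_singleton_of_mem_of_card_le_one {α : Type*} {s : Finset α} {a : α}
    (ha : a ∈ s) (hs : s.card ≤ 1) : s = {a} :=
  eq_singleton_iff_unique_mem.mpr ⟨ha, fun _ hx => card_le_one.mp hs _ hx a ha⟩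

lemma Finset.card_image_sdiff_of_forall_subset {α : Type*} [DecidableEq α]
    {E : Finset (Finset α)} {U : Finset α} (hU : ∀ e ∈ E, U ⊆ e) :
    (E.image (· \ U)).card = E.card :=
  card_image_of_injOn fun _ he _ hf hef => (sdiff_left_inj (hU _ he) (hU _ hf)).mp hef

lemma Finset.eq_of_sdiff_eq_singleton {α : Type*} [DecidableEq α] {s t : Finset α} {a x : α}
    (h : s \ t = {a}) (hs : x ∈ s) (ht : x ∉ t) : x = a :=
  mem_singleton.mp (h ▸ mem_sdiff.mpr ⟨hs, ht⟩)

namespace OneSperner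

variable {α : Type*} [DecidableEq α] {E F : Finset (Finset α)} {e f : Finset α} {z : α}

lemma mono (h : OneSperner E) (hFE : F ⊆ E) : OneSperner F :=
  fun e he f hf hne => h e (hFE he) f (hFE hf) hne

lemma image_sdiff (h : OneSperner E) {U : Finset α} (hU : ∀ e ∈ E, U ⊆ e) :
    OneSperner (E.image (· \ U)) := by
  simp only [OneSperner, mem_image]
  rintro _ ⟨e, he, rfl⟩ _ ⟨f, hf, rfl⟩ hne
  rw [sdiff_sdiff_sdiff_cancel_right (hU f hf), sdiff_sdiff_sdiff_cancel_right (hU e he)]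
  exact h e he f hf (by rintro rfl; exact hne rfl)

lemma sdiff_nonempty (h : OneSperner E) (he : e ∈ E) (hf : f ∈ E) (hne : e ≠ f) :
    (e \ f).Nonempty := by
  have := h e he f hf hne
  rw [← card_pos]
  omega

lemma one_lt_card_of_one_lt_card {V : Finset α} (h : OneSperner E) (hE : ∀ e ∈ E, e ⊆ V)
    (hcard : 1 < E.card) : 1 < V.card := by
  obtain ⟨e, he, f, hf, hne⟩ := one_lt_card.mp hcard
  obtain ⟨a, ha⟩ := h.sdiff_nonempty he hf hne
  obtain ⟨b, hb⟩ := h.sdiff_nonempty hf he hne.symm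
  rw [mem_sdiff] at ha hb
  exact one_lt_card.mpr ⟨a, hE e he ha.1, b, hE f hf hb.1, by rintro rfl; exact hb.2 ha.1⟩

lemma card_sdiff_eq_one_of_one_lt (h : OneSperner E) (he : e ∈ E) (hf : f ∈ E)
    (hlt : 1 < (e \ f).card) : (f \ e).card = 1 := by
  have := h e he f hf (by rintro rfl; simp at hlt)
  omega

lemma card_sdiff_eq_one (h : OneSperner E) (he : e ∈ E) (hf : f ∈ E) (hne : e ≠ f)
    (hcard : e.card ≤ f.card) : (e \ f).card = 1 := by
  simpa [min_eq_left (card_sdiff_le_card_sdiff_iff.mpr hcard)] using h e he f hf hne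

lemma sdiff_eq_singleton (h : OneSperner E) (he : e ∈ E) (hf : f ∈ E)
    (hcard : e.card ≤ f.card) (hze : z ∈ e) (hzf : z ∉ f) : e \ f = {z} :=
  eq_singleton_of_mem_of_card_le_one (mem_sdiff.mpr ⟨hze, hzf⟩)
    (h.card_sdiff_eq_one he hf (by rintro rfl; exact hzf hze) hcard).le

lemma sdiff_eq_singleton_of_extremal (h : OneSperner E) {emax emin : Finset α}
    (hemax : emax ∈ E) (hemin : emin ∈ E)
    (hmax : ∀ f ∈ E, f.card ≤ emax.card) (hmin : ∀ f ∈ E, emin.card ≤ f.card)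
    (hz : emin \ emax = {z}) (he : e ∈ E) (hf : f ∈ E) (hze : z ∈ e) (hzf : z ∉ f) :
    e \ f = {z} := by
  obtain ⟨hzemin, hzemax⟩ := mem_sdiff.mp (hz ▸ mem_singleton_self z)
  have hemin_f : emin \ f = {z} := h.sdiff_eq_singleton hemin hf (hmin f hf) hzemin hzf
  have he_emax : e \ emax = {z} := h.sdiff_eq_singleton he hemax (hmax e he) hze hzemax
  -- Otherwise `f \ e = {u}` with `u ∉ emax`, which forces `emin ⊊ e`.
  by_contra hne
  have hlt : 1 < (e \ f).card := by
    by_contra! hle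
    exact hne (eq_singleton_of_mem_of_card_le_one (mem_sdiff.mpr ⟨hze, hzf⟩) hle)
  obtain ⟨u, hu⟩ := card_eq_one.mp (h.card_sdiff_eq_one_of_one_lt he hf hlt)
  have hu_emax : u ∉ emax := by
    obtain ⟨v, hv⟩ := h.sdiff_nonempty hf hemax (by rintro rfl; exact hne he_emax)
    rw [mem_sdiff] at hv
    have hve : v ∉ e := fun hve => hzf (eq_of_sdiff_eq_singleton he_emax hve hv.2 ▸ hv.1)
    exact eq_of_sdiff_eq_singleton hu hv.1 hve ▸ hv.2
  have hemin_e : emin ⊆ e := by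
    intro y hy
    by_contra hye
    have hyz : y ≠ z := by rintro rfl; exact hye hze
    have hyf : y ∈ f := by_contra fun hyf => hyz (eq_of_sdiff_eq_singleton hemin_f hy hyf)
    have hyemax : y ∈ emax :=
      by_contra fun hyemax => hyz (eq_of_sdiff_eq_singleton hz hy hyemax)
    exact hu_emax (eq_of_sdiff_eq_singleton hu hyf hye ▸ hyemax)
  have hemin_ne : emin ≠ e := by rintro rfl; exact hne hemin_f
  exact (h.sdiff_nonempty hemin he hemin_ne).ne_empty (sdiff_eq_empty_iff_subset.mpr hemin_e)

def IsSplittingVertex (E : Finset (Finset α)) (z : α) : Prop :=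
  ∀ e ∈ E, ∀ f ∈ E, z ∈ e → z ∉ f → e \ f = {z}

lemma IsSplittingVertex.sup_filter_sdiff_subset (hz : IsSplittingVertex E z) (hf : f ∈ E)
    (hzf : z ∉ f) : (E.filter (z ∈ ·)).sup id \ {z} ⊆ f := by
  intro x hx
  obtain ⟨hx, hxz⟩ := mem_sdiff.mp hx
  obtain ⟨e, he, hxe⟩ := mem_sup.mp hx
  obtain ⟨heE, hze⟩ := mem_filter.mp he
  by_contra hxf
  exact hxz (mem_singleton.mpr (eq_of_sdiff_eq_singleton (hz e heE f hf hze hzf) hxe hxf))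

lemma exists_splitting_vertex (h : OneSperner E) (hcard : 1 < E.card) :
    ∃ z, (∃ e ∈ E, z ∈ e) ∧ IsSplittingVertex E z := by
  obtain ⟨emax, hemax, hmax⟩ := E.exists_max_image card (card_pos.mp (by omega))
  obtain ⟨emin, hemin', hmin'⟩ := (E.erase emax).exists_min_image card
    (by rw [← card_pos, card_erase_of_mem hemax]; omega)
  obtain ⟨hne, hemin⟩ := mem_erase.mp hemin'
  have hmin : ∀ f ∈ E, emin.card ≤ f.card := fun f hf => by
    rcases eq_or_ne f emax with rfl | hf'
    · exact hmax emin hemin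
    · exact hmin' f (mem_erase.mpr ⟨hf', hf⟩)
  obtain ⟨z, hz⟩ := card_eq_one.mp (h.card_sdiff_eq_one hemin hemax hne (hmax emin hemin))
  exact ⟨z, ⟨emin, hemin, (mem_sdiff.mp (hz ▸ mem_singleton_self z)).1⟩,
    fun e he f hf => h.sdiff_eq_singleton_of_extremal hemax hemin hmax hmin hz he hf⟩

theorem card_le_max_card_one {V : Finset α} (h : OneSperner E) (hE : ∀ e ∈ E, e ⊆ V) :
    E.card ≤ max V.card 1 := by
  induction V using Finset.strongInduction generalizing E with
  | H V ih =>
  rcases le_or_gt E.card 1 with hcard | hcard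
  · exact hcard.trans (le_max_right _ _)
  obtain ⟨z, ⟨e, he, hze⟩, hz⟩ := h.exists_splitting_vertex hcard
  have hzV : z ∈ V := hE e he hze
  set E₁ := E.filter (z ∈ ·)
  set E₀ := E.filter (z ∉ ·)
  set U := E₁.sup id \ {z}
  set W := (V \ {z}) \ U
  have hVz : V \ {z} ⊂ V := sdiff_ssubset (singleton_subset_iff.mpr hzV) (singleton_nonempty z)
  have hUV : U ⊆ V \ {z} :=
    sdiff_subset_sdiff (Finset.sup_le fun e he => hE e (mem_filter.mp he).1) le_rfl
  have hzE₁ : ∀ e ∈ E₁, {z} ⊆ e := fun e he => singleton_subset_iff.mpr (mem_filter.mp he).2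
  have hUE₀ : ∀ f ∈ E₀, U ⊆ f := fun f hf =>
    hz.sup_filter_sdiff_subset (mem_filter.mp hf).1 (mem_filter.mp hf).2
  have hE₁ : E₁.card ≤ max U.card 1 := by
    rw [← card_image_sdiff_of_forall_subset hzE₁]
    refine ih U (hUV.trans_ssubset hVz) ((h.mono (filter_subset _ _)).image_sdiff hzE₁) ?_
    simp only [mem_image]
    rintro _ ⟨e, he, rfl⟩
    exact sdiff_subset_sdiff (le_sup (f := id) he) le_rfl
  have hE₀ : E₀.card ≤ max W.card 1 := by
    rw [← card_image_sdiff_of_forall_subset hUE₀]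
    refine ih W (sdiff_subset.trans_ssubset hVz)
      ((h.mono (filter_subset _ _)).image_sdiff hUE₀) ?_
    simp only [mem_image]
    rintro _ ⟨f, hf, rfl⟩
    obtain ⟨hfE, hzf⟩ := mem_filter.mp hf
    exact sdiff_subset_sdiff (subset_sdiff.mpr ⟨hE f hfE, disjoint_singleton_right.mpr hzf⟩)
      le_rfl
  have hsplit : E₁.card + E₀.card = E.card := card_filter_add_card_filter_not _
  have hUW : W.card + U.card + 1 = V.card := by
    rw [card_sdiff_add_card_eq_card hUV, sdiff_singleton_eq_erase, card_erase_add_one hzV]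
  have hV := h.one_lt_card_of_one_lt_card hE hcard
  omega

end OneSperner

theorem stmt_13 {α : Type*} [DecidableEq α] (V : Finset α) (E : Finset (Finset α))
    (hE : ∀ e ∈ E, e ⊆ V) (h : OneSperner E) (hV : V.Nonempty) :
    E.card ≤ V.card :=
  (h.card_le_max_card_one hE).trans_eq (max_eq_left hV.card_pos)
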